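/- arXiv:2603.20892 — 2 statements merged into one kernel-verified Lean document; each statement's English description precedes it below -/
import Mathlib

section
/- Let (X,d) be a metric space, G : X → [0,∞) Borel, and x, y ∈ X with G(y) = 0. Then the map T ↦ E_G^T(x,y) is nonincreasing on (0,∞), satisfies E_G^T(x,y) ≥ d_G(x,y) for every T > 0, and lim_{T→∞} E_G^T(x,y) = d_G(x,y). -/
open MeasureTheory Set Filter
open scoped ENNReal

noncomputable section

/-- `m` is a (nonnegative, integrable) upper speed of the curve `γ` on `[a,b]`:
`dist (γ s) (γ t) ≤ ∫_s^t m` for all `a ≤ s ≤ t ≤ b`. -/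
def IsUpperSpeedOn {X : Type*} [MetricSpace X] (γ : ℝ → X) (m : ℝ → ℝ) (a b : ℝ) : Prop :=
  (∀ r ∈ Set.Icc a b, 0 ≤ m r) ∧
  IntervalIntegrable m MeasureTheory.volume a b ∧
  ∀ s t : ℝ, a ≤ s → s ≤ t → t ≤ b → dist (γ s) (γ t) ≤ ∫ r in s..t, m r

/-- The Finsler cost `d_G(x,y)`: the infimum of `∫_0^1 m(t) G(γ(t)) dt` over continuous
curves `γ : [0,1] → X` joining `x` to `y` with integrable upper speed `m`;
`+∞` if no admissible pair exists. -/
def finslerCost {X : Type*} [MetricSpace X] (G : X → ℝ) (x y : X) : ℝ≥0∞ :=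
  sInf { c : ℝ≥0∞ | ∃ γ : ℝ → X, ∃ m : ℝ → ℝ,
    ContinuousOn γ (Set.Icc 0 1) ∧ γ 0 = x ∧ γ 1 = y ∧
    IsUpperSpeedOn γ m 0 1 ∧
    c = ∫⁻ t in Set.Ioc (0:ℝ) 1, ENNReal.ofReal (m t * G (γ t)) }

/-- The action `E_G^T(x,y)`: the infimum of `∫_0^T ((1/2) m(t)² + (1/2) G(γ(t))²) dt` over
continuous curves `γ : [0,T] → X` joining `x` to `y` with square-integrable upper speed `m`;
`+∞` if no admissible pair exists. -/
def actionCost {X : Type*} [MetricSpace X] (G : X → ℝ) (T : ℝ) (x y : X) : ℝ≥0∞ :=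
  sInf { c : ℝ≥0∞ | ∃ γ : ℝ → X, ∃ m : ℝ → ℝ,
    ContinuousOn γ (Set.Icc 0 T) ∧ γ 0 = x ∧ γ T = y ∧
    IsUpperSpeedOn γ m 0 T ∧
    IntervalIntegrable (fun t => (m t) ^ 2) MeasureTheory.volume 0 T ∧
    c = ∫⁻ t in Set.Ioc (0:ℝ) T,
          ENNReal.ofReal ((1/2) * (m t) ^ 2 + (1/2) * (G (γ t)) ^ 2) }

/-- `G` is a strong upper gradient of `v`: along every continuous curve with integrable
upper speed `m`, `|v(γ t) − v(γ s)| ≤ ∫_s^t G(γ r) m(r) dr` (the right-hand side taken as a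
possibly infinite nonnegative integral). -/
def IsStrongUpperGradient {X : Type*} [MetricSpace X] (G v : X → ℝ) : Prop :=
  ∀ (a b : ℝ) (γ : ℝ → X) (m : ℝ → ℝ),
    ContinuousOn γ (Set.Icc a b) → IsUpperSpeedOn γ m a b →
    ∀ s t : ℝ, a ≤ s → s ≤ t → t ≤ b →
      ENNReal.ofReal |v (γ t) - v (γ s)| ≤
        ∫⁻ r in Set.Ioc s t, ENNReal.ofReal (G (γ r) * m r)

/-- A gradient-flow curve (curve of maximal slope in energy-dissipation form) of `v` with
respect to `G`: `η` is continuous on `[0,∞)`, `G∘η` is square-integrable on compacts and is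
an upper speed of `η` on every compact subinterval of `[0,∞)`, and the energy-dissipation
equality `v(η s) − v(η t) = ∫_s^t G(η r)² dr` holds for `0 ≤ s ≤ t`. -/
def IsGradientFlowCurve {X : Type*} [MetricSpace X] (v G : X → ℝ) (η : ℝ → X) : Prop :=
  ContinuousOn η (Set.Ici 0) ∧
  (∀ b : ℝ, 0 ≤ b → IntervalIntegrable (fun t => (G (η t)) ^ 2) MeasureTheory.volume 0 b) ∧
  (∀ a b : ℝ, 0 ≤ a → a ≤ b → IsUpperSpeedOn η (fun t => G (η t)) a b) ∧
  ∀ s t : ℝ, 0 ≤ s → s ≤ t → v (η s) - v (η t) = ∫ r in s..t, (G (η r)) ^ 2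

/-!
Resting at `y` is free because `G y = 0`, so a competitor on `[0,T₁]` extends to `[0,T₂]` at the
same action: the action is nonincreasing in `T`. Rescaling a competitor on `[0,T]` to `[0,1]`
and using `m G ≤ m²/2 + G²/2` bounds the action below by the Finsler cost. Conversely, run a
Finsler competitor `(γ, m)` at speed `G + δ`, i.e. reparametrize it by the generalized inverse of
`σ(t) = ∫₀ᵗ m / (G ∘ γ + δ)`. On `[0, σ 1]` the integrand `½ (G + δ)² + ½ G²` equals
`G (G + δ) + δ²/2`; the first term integrates to `∫₀¹ m G(γ)` and `σ 1 ≤ δ⁻¹ ∫₀¹ m`, so the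
action is at most the Finsler cost of `(γ, m)` plus `δ ∫₀¹ m / 2`.
-/

lemma ofReal_intervalIntegral_eq_setLIntegral {f : ℝ → ℝ} {a b : ℝ} (hab : a ≤ b)
    (hf : IntegrableOn f (Ioc a b)) (hf0 : ∀ r ∈ Ioc a b, 0 ≤ f r) :
    ENNReal.ofReal (∫ r in a..b, f r) = ∫⁻ r in Ioc a b, ENNReal.ofReal (f r) := by
  rw [intervalIntegral.integral_of_le hab, ofReal_integral_eq_lintegral_ofReal hf
    ((ae_restrict_iff' measurableSet_Ioc).2 (.of_forall hf0))]

lemma intervalIntegrable_indicator_Iic {f : ℝ → ℝ} {a b c : ℝ} (hab : a ≤ b) (hbc : b ≤ c)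
    (hf : IntervalIntegrable f volume a b) :
    IntervalIntegrable ((Iic b).indicator f) volume a c := by
  rw [intervalIntegrable_iff_integrableOn_Ioc_of_le (hab.trans hbc), IntegrableOn,
    integrable_indicator_iff measurableSet_Iic, IntegrableOn,
    Measure.restrict_restrict measurableSet_Iic, Iic_inter_Ioc_of_le hbc]
  exact (intervalIntegrable_iff_integrableOn_Ioc_of_le hab).1 hf

lemma setLIntegral_Ioc_eq_comp_mul_left {T : ℝ} (hT : 0 < T) (F : ℝ → ℝ≥0∞) :
    ∫⁻ t in Ioc 0 T, F t = ∫⁻ u in Ioc 0 1, ENNReal.ofReal T * F (T * u) := by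
  have := lintegral_image_eq_lintegral_abs_deriv_mul (measurableSet_Ioc (a := 0) (b := 1))
    (f := (T * ·)) (f' := fun _ => T)
    (fun u _ => by simpa using ((hasDerivAt_id u).const_mul T).hasDerivWithinAt)
    (mul_right_injective₀ hT.ne').injOn F
  rwa [image_mul_left_Ioc hT, mul_zero, mul_one, abs_of_pos hT] at this

def primitive (g : ℝ → ℝ) (t : ℝ) : ℝ := ∫ r in (0:ℝ)..t, g r

/-- Generalized inverse of `primitive g` on `[0,1]`. Truncating `s` at `primitive g 1` keeps the
set nonempty (so `sInf` is not a junk value) and the map monotone. -/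
def primitiveInv (g : ℝ → ℝ) (s : ℝ) : ℝ :=
  sInf {t ∈ Icc (0:ℝ) 1 | min s (primitive g 1) ≤ primitive g t}

section Primitive

variable {g : ℝ → ℝ}

@[simp] lemma primitive_zero : primitive g 0 = 0 := intervalIntegral.integral_same

lemma primitive_sub_primitive (hgi : Integrable g) (u v : ℝ) :
    primitive g v - primitive g u = ∫ r in u..v, g r :=
  intervalIntegral.integral_interval_sub_left hgi.intervalIntegrable hgi.intervalIntegrable

lemma continuous_primitive (hgi : Integrable g) : Continuous (primitive g) :=
  hgi.continuous_primitive 0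

lemma primitive_nonneg (hg0 : ∀ r, 0 ≤ g r) {t : ℝ} (ht : 0 ≤ t) : 0 ≤ primitive g t :=
  intervalIntegral.integral_nonneg ht fun r _ => hg0 r

lemma monotone_primitive (hg0 : ∀ r, 0 ≤ g r) (hgi : Integrable g) : Monotone (primitive g) :=
  fun u v huv => sub_nonneg.1 <| primitive_sub_primitive hgi u v ▸
    intervalIntegral.integral_nonneg huv fun r _ => hg0 r

lemma setLIntegral_Ioc_eq_ofReal_primitive_sub (hg0 : ∀ r, 0 ≤ g r) (hgi : Integrable g)
    (c d : ℝ) :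
    ∫⁻ r in Ioc c d, ENNReal.ofReal (g r) = ENNReal.ofReal (primitive g d - primitive g c) := by
  rcases le_total c d with hcd | hdc
  · rw [primitive_sub_primitive hgi,
      ofReal_intervalIntegral_eq_setLIntegral hcd hgi.integrableOn fun r _ => hg0 r]
  · rw [Ioc_eq_empty (not_lt.2 hdc), Measure.restrict_empty, lintegral_zero_measure,
      ENNReal.ofReal_of_nonpos (sub_nonpos.2 (monotone_primitive hg0 hgi hdc))]

lemma primitiveInv_mem_Icc (g : ℝ → ℝ) (s : ℝ) : primitiveInv g s ∈ Icc (0:ℝ) 1 :=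
  ⟨le_csInf ⟨1, right_mem_Icc.2 zero_le_one, min_le_right _ _⟩ fun _ ht => ht.1.1,
    csInf_le ⟨0, fun _ ht => ht.1.1⟩ ⟨right_mem_Icc.2 zero_le_one, min_le_right _ _⟩⟩

lemma monotone_primitiveInv (g : ℝ → ℝ) : Monotone (primitiveInv g) := fun _ _ hss' =>
  csInf_le_csInf ⟨0, fun _ ht => ht.1.1⟩ ⟨1, right_mem_Icc.2 zero_le_one, min_le_right _ _⟩
    fun _ ht => ⟨ht.1, (min_le_min_right _ hss').trans ht.2⟩

lemma measurable_primitiveInv (g : ℝ → ℝ) : Measurable (primitiveInv g) :=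
  (monotone_primitiveInv g).measurable

lemma primitiveInv_le_of_le_primitive {s t : ℝ} (ht : t ∈ Icc (0:ℝ) 1)
    (hst : s ≤ primitive g t) : primitiveInv g s ≤ t :=
  csInf_le ⟨0, fun _ hu => hu.1.1⟩ ⟨ht, min_le_of_left_le hst⟩

lemma primitiveInv_zero (g : ℝ → ℝ) : primitiveInv g 0 = 0 :=
  le_antisymm (primitiveInv_le_of_le_primitive (left_mem_Icc.2 zero_le_one) primitive_zero.ge)
    (primitiveInv_mem_Icc g 0).1

lemma primitive_primitiveInv (hg0 : ∀ r, 0 ≤ g r) (hgi : Integrable g) {s : ℝ} (hs0 : 0 ≤ s)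
    (hs : s ≤ primitive g 1) : primitive g (primitiveInv g s) = s := by
  have hτ := primitiveInv_mem_Icc g s
  refine le_antisymm ?_ ?_
  · by_contra! hlt
    obtain ⟨t, ht, hts⟩ : s ∈ primitive g '' Icc 0 (primitiveInv g s) :=
      intermediate_value_Icc hτ.1 (continuous_primitive hgi).continuousOn
        ⟨by rwa [primitive_zero], hlt.le⟩
    have := monotone_primitive hg0 hgi
      (primitiveInv_le_of_le_primitive ⟨ht.1, ht.2.trans hτ.2⟩ hts.ge)
    exact this.not_gt (hts ▸ hlt)
  · have hclosed : IsClosed {t ∈ Icc (0:ℝ) 1 | min s (primitive g 1) ≤ primitive g t} :=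
      isClosed_Icc.inter (isClosed_le continuous_const (continuous_primitive hgi))
    have hmem := hclosed.csInf_mem ⟨1, right_mem_Icc.2 zero_le_one, min_le_right _ _⟩
      ⟨0, fun _ ht => ht.1.1⟩
    exact (min_eq_left hs).symm.trans_le hmem.2

lemma primitiveInv_le_iff (hg0 : ∀ r, 0 ≤ g r) (hgi : Integrable g) {u : ℝ} (hu0 : 0 < u)
    (hu : u ≤ primitive g 1) (b : ℝ) : primitiveInv g u ≤ b ↔ u ≤ primitive g b := by
  refine ⟨fun h => primitive_primitiveInv hg0 hgi hu0.le hu ▸ monotone_primitive hg0 hgi h,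
    fun h => ?_⟩
  rcases lt_or_ge b 0 with hb | hb
  · have := monotone_primitive hg0 hgi hb.le
    rw [primitive_zero] at this
    linarith
  rcases le_or_gt b 1 with hb1 | hb1
  · exact primitiveInv_le_of_le_primitive ⟨hb, hb1⟩ h
  · exact (primitiveInv_mem_Icc g u).2.trans hb1.le

theorem map_primitiveInv_restrict_Ioc (hg0 : ∀ r, 0 ≤ g r) (hgi : Integrable g) {s s' : ℝ}
    (hs : 0 ≤ s) (hss' : s ≤ s') (hs' : s' ≤ primitive g 1) :
    (volume.restrict (Ioc s s')).map (primitiveInv g) =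
      (volume.restrict (Ioc (primitiveInv g s) (primitiveInv g s'))).withDensity
        fun r => ENNReal.ofReal (g r) := by
  have hτ := measurable_primitiveInv g
  have hσ := monotone_primitive hg0 hgi
  have hmap : ∀ a b, (volume.restrict (Ioc s s')).map (primitiveInv g) (Ioc a b) =
      ENNReal.ofReal (min (primitive g b) s' - max (primitive g a) s) := by
    intro a b
    rw [Measure.map_apply hτ measurableSet_Ioc, Measure.restrict_apply (hτ measurableSet_Ioc)]
    have hpre : primitiveInv g ⁻¹' Ioc a b ∩ Ioc s s' =
        Ioc (max (primitive g a) s) (min (primitive g b) s') := by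
      ext u
      simp only [mem_inter_iff, mem_preimage, mem_Ioc, max_lt_iff, le_min_iff]
      by_cases hu : s < u ∧ u ≤ s'
      · have h := primitiveInv_le_iff hg0 hgi (hs.trans_lt hu.1) (hu.2.trans hs')
        rw [← not_le, h a, h b, not_le]
        tauto
      · tauto
    rw [hpre, Real.volume_Ioc]
  have hdens : ∀ a b, (volume.restrict (Ioc (primitiveInv g s) (primitiveInv g s'))).withDensity
      (fun r => ENNReal.ofReal (g r)) (Ioc a b) =
      ENNReal.ofReal (min (primitive g b) s' - max (primitive g a) s) := by
    intro a b
    rw [withDensity_apply _ measurableSet_Ioc, Measure.restrict_restrict measurableSet_Ioc,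
      Ioc_inter_Ioc, setLIntegral_Ioc_eq_ofReal_primitive_sub hg0 hgi, hσ.map_max, hσ.map_min,
      primitive_primitiveInv hg0 hgi hs (hss'.trans hs'),
      primitive_primitiveInv hg0 hgi (hs.trans hss') hs']
  exact Measure.ext_of_Ioc' _ _ (fun a b _ => hmap a b ▸ ENNReal.ofReal_ne_top)
    fun a b _ => (hmap a b).trans (hdens a b).symm

theorem setLIntegral_comp_primitiveInv (hg0 : ∀ r, 0 ≤ g r) (hgi : Integrable g) {s s' : ℝ}
    (hs : 0 ≤ s) (hss' : s ≤ s') (hs' : s' ≤ primitive g 1) {f : ℝ → ℝ≥0∞} (hf : Measurable f) :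
    ∫⁻ u in Ioc s s', f (primitiveInv g u) =
      ∫⁻ r in Ioc (primitiveInv g s) (primitiveInv g s'), f r * ENNReal.ofReal (g r) := by
  rw [← lintegral_map hf (measurable_primitiveInv g),
    map_primitiveInv_restrict_Ioc hg0 hgi hs hss' hs',
    lintegral_withDensity_eq_lintegral_mul₀ hgi.aemeasurable.ennreal_ofReal.restrict
      hf.aemeasurable]
  simp only [Pi.mul_apply, mul_comm]

lemma exists_integrable_eq_mul {m w : ℝ → ℝ} {δ : ℝ} (hm : Measurable m)
    (hm0 : ∀ r ∈ Icc (0:ℝ) 1, 0 ≤ m r) (hmi : IntegrableOn m (Icc 0 1)) (hw : Measurable w)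
    (hδ : 0 < δ) (hδw : ∀ r, δ ≤ w r) :
    ∃ g : ℝ → ℝ, (∀ r, 0 ≤ g r) ∧ Integrable g ∧ (∀ r ∈ Icc (0:ℝ) 1, m r = w r * g r) ∧
      primitive g 1 ≤ δ⁻¹ * ∫ r in (0:ℝ)..1, m r := by
  have hmw : ∀ r ∈ Icc (0:ℝ) 1, m r / w r ≤ δ⁻¹ * m r := fun r hr => by
    rw [inv_mul_eq_div]
    exact div_le_div_of_nonneg_left (hm0 r hr) hδ (hδw r)
  have hgi : Integrable ((Icc (0:ℝ) 1).indicator fun r => m r / w r) := by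
    rw [integrable_indicator_iff measurableSet_Icc]
    refine (hmi.const_mul δ⁻¹).mono' (hm.div hw).aestronglyMeasurable
      ((ae_restrict_iff' measurableSet_Icc).2 (.of_forall fun r hr => ?_))
    rw [Real.norm_of_nonneg (div_nonneg (hm0 r hr) (hδ.le.trans (hδw r)))]
    exact hmw r hr
  refine ⟨(Icc (0:ℝ) 1).indicator fun r => m r / w r, fun r => indicator_apply_nonneg fun hr =>
    div_nonneg (hm0 r hr) (hδ.le.trans (hδw r)), hgi, fun r hr => ?_, ?_⟩
  · rw [indicator_of_mem hr, mul_div_cancel₀ _ (hδ.trans_le (hδw r)).ne']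
  · rw [primitive, ← intervalIntegral.integral_const_mul]
    refine intervalIntegral.integral_mono_on zero_le_one hgi.intervalIntegrable
      ((intervalIntegrable_iff_integrableOn_Icc_of_le zero_le_one).2 (hmi.const_mul δ⁻¹))
      fun r hr => ?_
    exact (indicator_of_mem hr _).trans_le (hmw r hr)

end Primitive

namespace IsUpperSpeedOn

variable {X : Type*} [MetricSpace X] {γ : ℝ → X} {m w g : ℝ → ℝ} {a b c : ℝ}

theorem integrableOn_Icc (h : IsUpperSpeedOn γ m a b) (hab : a ≤ b) :
    IntegrableOn m (Icc a b) := by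
  rw [integrableOn_Icc_iff_integrableOn_Ioc]
  exact (intervalIntegrable_iff_integrableOn_Ioc_of_le hab).1 h.2.1

theorem dist_le_dist_primitive (h : IsUpperSpeedOn γ m a b) {s t : ℝ} (hs : s ∈ Icc a b)
    (ht : t ∈ Icc a b) : dist (γ s) (γ t) ≤ dist (∫ r in a..s, m r) (∫ r in a..t, m r) := by
  wlog hst : s ≤ t generalizing s t
  · rw [dist_comm, dist_comm (∫ r in a..s, m r)]
    exact this ht hs (le_of_not_ge hst)
  have hint : ∀ u ∈ Icc a b, IntervalIntegrable m volume a u := fun u hu =>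
    h.2.1.mono_set (uIcc_subset_uIcc left_mem_uIcc (Icc_subset_uIcc hu))
  rw [Real.dist_eq, abs_sub_comm,
    intervalIntegral.integral_interval_sub_left (hint t ht) (hint s hs)]
  exact (h.2.2 s t hs.1 hst ht.2).trans (le_abs_self _)

theorem continuousOn (h : IsUpperSpeedOn γ m a b) : ContinuousOn γ (Icc a b) := by
  have hF : ContinuousOn (fun t => ∫ r in a..t, m r) (Icc a b) :=
    (intervalIntegral.continuousOn_primitive_interval' h.2.1 left_mem_uIcc).mono Icc_subset_uIcc
  intro t ht
  rw [ContinuousWithinAt, tendsto_iff_dist_tendsto_zero]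
  exact squeeze_zero' (.of_forall fun _ => dist_nonneg)
    (eventually_nhdsWithin_of_forall fun s hs => h.dist_le_dist_primitive hs ht)
    (tendsto_iff_dist_tendsto_zero.1 (hF t ht))

theorem congr {γ' : ℝ → X} (h : IsUpperSpeedOn γ m a b) (hγ : EqOn γ γ' (Icc a b)) :
    IsUpperSpeedOn γ' m a b :=
  ⟨h.1, h.2.1, fun s t hs hst ht => by
    rw [← hγ ⟨hs, hst.trans ht⟩, ← hγ ⟨hs.trans hst, ht⟩]
    exact h.2.2 s t hs hst ht⟩

theorem exists_measurable (h : IsUpperSpeedOn γ m a b) (hab : a ≤ b) :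
    ∃ m', Measurable m' ∧ m' =ᵐ[volume.restrict (Ioc a b)] m ∧ IsUpperSpeedOn γ m' a b := by
  have hmi : IntegrableOn m (Ioc a b) :=
    (intervalIntegrable_iff_integrableOn_Ioc_of_le hab).1 h.2.1
  refine ⟨fun r => max (hmi.aemeasurable.mk m r) 0,
    hmi.aemeasurable.measurable_mk.max measurable_const, ?_⟩
  have hae : (fun r => max (hmi.aemeasurable.mk m r) 0) =ᵐ[volume.restrict (Ioc a b)] m := by
    filter_upwards [hmi.aemeasurable.ae_eq_mk, ae_restrict_mem measurableSet_Ioc] with r hr hr'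
    rw [← hr]
    exact max_eq_left (h.1 r (Ioc_subset_Icc_self hr'))
  refine ⟨hae, fun r _ => le_max_right _ _,
    (intervalIntegrable_iff_integrableOn_Ioc_of_le hab).2 (hmi.congr hae.symm),
    fun s t hs hst ht => ?_⟩
  rw [intervalIntegral.integral_of_le hst,
    integral_congr_ae (ae_restrict_of_ae_restrict_of_subset (Ioc_subset_Ioc hs ht) hae),
    ← intervalIntegral.integral_of_le hst]
  exact h.2.2 s t hs hst ht

theorem comp_min (h : IsUpperSpeedOn γ m a b) (hab : a ≤ b) (hbc : b ≤ c) :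
    IsUpperSpeedOn (fun t => γ (min t b)) ((Iic b).indicator m) a c := by
  have h0 : ∀ r ∈ Icc a c, 0 ≤ (Iic b).indicator m r := fun r hr =>
    indicator_apply_nonneg fun hrb => h.1 r ⟨hr.1, hrb⟩
  refine ⟨h0, intervalIntegrable_indicator_Iic hab hbc h.2.1, fun s t hs hst ht => ?_⟩
  show dist (γ (min s b)) (γ (min t b)) ≤ _
  rcases le_or_gt s b with hsb | hbs
  · have hint : ∫ r in s..t, (Iic b).indicator m r = ∫ r in s..min t b, m r := by
      rw [intervalIntegral.integral_of_le hst, intervalIntegral.integral_of_le (le_min hst hsb),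
        integral_indicator measurableSet_Iic, Measure.restrict_restrict measurableSet_Iic,
        inter_comm, Ioc_inter_Iic]
    rw [hint, min_eq_left hsb]
    exact h.2.2 s (min t b) hs (le_min hst hsb) (min_le_right _ _)
  · rw [min_eq_right hbs.le, min_eq_right (hbs.le.trans hst), dist_self]
    exact intervalIntegral.integral_nonneg hst fun r hr =>
      h0 r ⟨hs.trans hr.1, hr.2.trans ht⟩

theorem comp_mul_left {T : ℝ} (h : IsUpperSpeedOn γ m 0 T) (hT : 0 < T) :
    IsUpperSpeedOn (fun u => γ (T * u)) (fun u => T * m (T * u)) 0 1 := by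
  refine ⟨fun r hr => mul_nonneg hT.le (h.1 _ ⟨mul_nonneg hT.le hr.1,
    mul_le_of_le_one_right hT.le hr.2⟩), ?_, fun s t hs hst ht => ?_⟩
  · have := (h.2.1.comp_mul_left (c := T)).const_mul T
    rwa [zero_div, div_self hT.ne'] at this
  · rw [intervalIntegral.integral_const_mul, ← smul_eq_mul,
      intervalIntegral.smul_integral_comp_mul_left]
    exact h.2.2 _ _ (mul_nonneg hT.le hs) (mul_le_mul_of_nonneg_left hst hT.le)
      (mul_le_of_le_one_right hT.le ht)

theorem comp_primitiveInv (h : IsUpperSpeedOn γ m 0 1) (hg0 : ∀ r, 0 ≤ g r)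
    (hgi : Integrable g) (hw : Measurable w) (hw0 : ∀ r, 0 ≤ w r)
    (hm : ∀ r ∈ Icc (0:ℝ) 1, m r = w r * g r) :
    IsUpperSpeedOn (fun u => γ (primitiveInv g u)) (fun u => w (primitiveInv g u)) 0
      (primitive g 1) := by
  have hT0 : 0 ≤ primitive g 1 := primitive_nonneg hg0 zero_le_one
  have hmi := h.integrableOn_Icc zero_le_one
  have hτ := primitiveInv_mem_Icc g
  have hlint : ∀ s s', 0 ≤ s → s ≤ s' → s' ≤ primitive g 1 →
      ∫⁻ u in Ioc s s', ENNReal.ofReal (w (primitiveInv g u)) =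
        ENNReal.ofReal (∫ r in primitiveInv g s..primitiveInv g s', m r) := by
    intro s s' hs hss' hs'
    have hsub : Ioc (primitiveInv g s) (primitiveInv g s') ⊆ Icc 0 1 := fun r hr =>
      ⟨(hτ s).1.trans hr.1.le, hr.2.trans (hτ s').2⟩
    rw [setLIntegral_comp_primitiveInv hg0 hgi hs hss' hs' hw.ennreal_ofReal,
      ofReal_intervalIntegral_eq_setLIntegral (monotone_primitiveInv g hss') (hmi.mono_set hsub)
        fun r hr => h.1 r (hsub hr)]
    refine setLIntegral_congr_fun measurableSet_Ioc fun r hr => ?_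
    rw [hm r (hsub hr), ENNReal.ofReal_mul (hw0 r)]
  have hint : IntegrableOn (fun u => w (primitiveInv g u)) (Ioc 0 (primitive g 1)) :=
    ⟨(hw.comp (measurable_primitiveInv g)).aestronglyMeasurable, by
      rw [hasFiniteIntegral_iff_ofReal (.of_forall fun _ => hw0 _), hlint 0 _ le_rfl hT0 le_rfl]
      exact ENNReal.ofReal_lt_top⟩
  refine ⟨fun _ _ => hw0 _, (intervalIntegrable_iff_integrableOn_Ioc_of_le hT0).2 hint,
    fun s t hs hst ht => ?_⟩
  calc dist (γ (primitiveInv g s)) (γ (primitiveInv g t))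
      ≤ ∫ r in primitiveInv g s..primitiveInv g t, m r :=
        h.2.2 _ _ (hτ s).1 (monotone_primitiveInv g hst) (hτ t).2
    _ = ∫ u in s..t, w (primitiveInv g u) := by
      rw [← ENNReal.ofReal_eq_ofReal_iff
          (intervalIntegral.integral_nonneg (monotone_primitiveInv g hst)
            fun r hr => h.1 r ⟨(hτ s).1.trans hr.1, hr.2.trans (hτ t).2⟩)
          (intervalIntegral.integral_nonneg hst fun _ _ => hw0 _),
        ← hlint s t hs hst ht, ofReal_intervalIntegral_eq_setLIntegral hst
          (hint.mono_set (Ioc_subset_Ioc hs ht)) fun _ _ => hw0 _]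

theorem apply_primitiveInv_primitive_one (h : IsUpperSpeedOn γ m 0 1) (hg0 : ∀ r, 0 ≤ g r)
    (hgi : Integrable g) (hm : ∀ r ∈ Icc (0:ℝ) 1, m r = w r * g r) :
    γ (primitiveInv g (primitive g 1)) = γ 1 := by
  have hT0 : 0 ≤ primitive g 1 := primitive_nonneg hg0 zero_le_one
  set t := primitiveInv g (primitive g 1)
  have ht := primitiveInv_mem_Icc g (primitive g 1)
  -- `primitive g` is flat on `[t, 1]`, so `g`, hence `m = w * g`, vanishes a.e. there.
  have hg : ∫ r in Ioc t 1, g r = 0 := by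
    rw [← intervalIntegral.integral_of_le ht.2, ← primitive_sub_primitive hgi,
      primitive_primitiveInv hg0 hgi hT0 le_rfl, sub_self]
  have hg_ae : g =ᵐ[volume.restrict (Ioc t 1)] 0 :=
    (integral_eq_zero_iff_of_nonneg (fun r => hg0 r) hgi.integrableOn).1 hg
  have hm0 : ∫ r in t..1, m r = 0 := by
    rw [intervalIntegral.integral_of_le ht.2]
    refine integral_eq_zero_of_ae ?_
    filter_upwards [hg_ae, ae_restrict_mem measurableSet_Ioc] with r hr hr'
    rw [hm r ⟨ht.1.trans hr'.1.le, hr'.2⟩, hr, Pi.zero_apply, mul_zero]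
  exact dist_le_zero.1 (hm0 ▸ h.2.2 t 1 ht.1 ht.2 le_rfl)

end IsUpperSpeedOn

section Action

variable {X : Type*} [MetricSpace X] {G : X → ℝ} {x y : X}

theorem actionCost_antitone (hGy : G y = 0) {T₁ T₂ : ℝ} (h0 : 0 ≤ T₁) (h12 : T₁ ≤ T₂) :
    actionCost G T₂ x y ≤ actionCost G T₁ x y := by
  refine sInf_le_sInf ?_
  rintro _ ⟨γ, m, -, rfl, rfl, h, hsq, rfl⟩
  have hsq' : (fun t => ((Iic T₁).indicator m t) ^ 2) = (Iic T₁).indicator fun t => m t ^ 2 := by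
    ext t
    by_cases ht : t ∈ Iic T₁ <;> simp [ht]
  have h' := h.comp_min h0 h12
  refine ⟨_, _, h'.continuousOn, by rw [min_eq_left h0], by rw [min_eq_right h12], h',
    hsq' ▸ intervalIntegrable_indicator_Iic h0 h12 hsq, ?_⟩
  have hrest : ∫⁻ t in Ioc T₁ T₂, ENNReal.ofReal
      (1 / 2 * (Iic T₁).indicator m t ^ 2 + 1 / 2 * G (γ (min t T₁)) ^ 2) = 0 :=
    (setLIntegral_congr_fun measurableSet_Ioc fun t ht => by
      simp [not_le.2 ht.1, min_eq_right ht.1.le, hGy]).trans lintegral_zero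
  rw [← Ioc_union_Ioc_eq_Ioc h0 h12,
    lintegral_union measurableSet_Ioc (Ioc_disjoint_Ioc_of_le le_rfl), hrest, add_zero]
  exact setLIntegral_congr_fun measurableSet_Ioc fun t ht => by simp [ht.2]

theorem finslerCost_le_actionCost {T : ℝ} (hT : 0 < T) :
    finslerCost G x y ≤ actionCost G T x y := by
  refine le_sInf ?_
  rintro _ ⟨γ, m, -, rfl, rfl, h, -, rfl⟩
  calc finslerCost G (γ 0) (γ T) ≤ ∫⁻ t in Ioc 0 T, ENNReal.ofReal (m t * G (γ t)) := by
        refine sInf_le ⟨_, _, (h.comp_mul_left hT).continuousOn, by simp, by simp,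
          h.comp_mul_left hT, ?_⟩
        rw [setLIntegral_Ioc_eq_comp_mul_left hT]
        refine setLIntegral_congr_fun measurableSet_Ioc fun u _ => ?_
        rw [← ENNReal.ofReal_mul hT.le, mul_assoc]
    _ ≤ _ := setLIntegral_mono' measurableSet_Ioc fun t _ =>
        ENNReal.ofReal_le_ofReal (by nlinarith [sq_nonneg (m t - G (γ t))])

lemma intervalIntegrable_sq_of_lintegral_ne_top {μ F : ℝ → ℝ} {T : ℝ} (hT : 0 ≤ T)
    (hμ : AEStronglyMeasurable μ (volume.restrict (Ioc 0 T)))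
    (h : ∫⁻ t in Ioc 0 T, ENNReal.ofReal (1 / 2 * μ t ^ 2 + 1 / 2 * F t ^ 2) ≠ ⊤) :
    IntervalIntegrable (fun t => μ t ^ 2) volume 0 T := by
  rw [intervalIntegrable_iff_integrableOn_Ioc_of_le hT]
  refine ⟨hμ.pow 2, ?_⟩
  rw [hasFiniteIntegral_iff_ofReal (.of_forall fun _ => sq_nonneg _)]
  calc ∫⁻ t in Ioc 0 T, ENNReal.ofReal (μ t ^ 2)
      ≤ ∫⁻ t in Ioc 0 T, 2 * ENNReal.ofReal (1 / 2 * μ t ^ 2 + 1 / 2 * F t ^ 2) :=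
        lintegral_mono fun t => by
          rw [← ENNReal.ofReal_ofNat 2, ← ENNReal.ofReal_mul zero_le_two]
          exact ENNReal.ofReal_le_ofReal (by nlinarith [sq_nonneg (F t)])
    _ < ⊤ := by
        rw [lintegral_const_mul' _ _ ENNReal.ofNat_ne_top]
        exact ENNReal.mul_lt_top (by simp) h.lt_top

theorem lintegral_action_comp_primitiveInv_le [MeasurableSpace X] [BorelSpace X]
    (hG0 : ∀ x, 0 ≤ G x) (hG : Measurable G) {γ : ℝ → X} {m g : ℝ → ℝ} (hγ : Continuous γ)
    {δ : ℝ} (hδ : 0 ≤ δ) (hg0 : ∀ r, 0 ≤ g r) (hgi : Integrable g)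
    (hm : ∀ r ∈ Icc (0:ℝ) 1, m r = (G (γ r) + δ) * g r) :
    ∫⁻ u in Ioc 0 (primitive g 1), ENNReal.ofReal (1 / 2 * (G (γ (primitiveInv g u)) + δ) ^ 2 +
        1 / 2 * G (γ (primitiveInv g u)) ^ 2) ≤
      (∫⁻ t in Ioc (0:ℝ) 1, ENNReal.ofReal (m t * G (γ t))) +
        ENNReal.ofReal (δ ^ 2 / 2 * primitive g 1) := by
  set T := primitive g 1
  have hT0 : 0 ≤ T := primitive_nonneg hg0 zero_le_one
  have hGγ : Measurable fun r => ENNReal.ofReal (G (γ r) * (G (γ r) + δ)) :=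
    ((hG.comp hγ.measurable).mul ((hG.comp hγ.measurable).add_const δ)).ennreal_ofReal
  calc _ = ∫⁻ u in Ioc 0 T, (ENNReal.ofReal (G (γ (primitiveInv g u)) *
          (G (γ (primitiveInv g u)) + δ)) + ENNReal.ofReal (δ ^ 2 / 2)) :=
        lintegral_congr fun u => by
          rw [← ENNReal.ofReal_add (mul_nonneg (hG0 _) (add_nonneg (hG0 _) hδ)) (by positivity)]
          ring_nf
    _ = (∫⁻ u in Ioc 0 T, ENNReal.ofReal (G (γ (primitiveInv g u)) *
          (G (γ (primitiveInv g u)) + δ))) + ENNReal.ofReal (δ ^ 2 / 2 * T) := by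
        rw [lintegral_add_right _ measurable_const, setLIntegral_const, Real.volume_Ioc, sub_zero,
          ENNReal.ofReal_mul (by positivity)]
    _ ≤ _ := by
        refine add_le_add_left ?_ _
        rw [setLIntegral_comp_primitiveInv hg0 hgi le_rfl hT0 le_rfl hGγ, primitiveInv_zero]
        refine (lintegral_mono_set (Ioc_subset_Ioc le_rfl (primitiveInv_mem_Icc g T).2)).trans
          (le_of_eq (setLIntegral_congr_fun measurableSet_Ioc fun r hr => ?_))
        rw [← ENNReal.ofReal_mul (mul_nonneg (hG0 _) (add_nonneg (hG0 _) hδ)), mul_assoc,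
          ← hm r (Ioc_subset_Icc_self hr), mul_comm]

theorem exists_actionCost_le_of_isUpperSpeedOn [MeasurableSpace X] [BorelSpace X]
    (hG0 : ∀ x, 0 ≤ G x) (hG : Measurable G) {γ : ℝ → X} {m : ℝ → ℝ} (hγ : Continuous γ)
    (hm : Measurable m) (h : IsUpperSpeedOn γ m 0 1)
    (hfin : ∫⁻ t in Ioc (0:ℝ) 1, ENNReal.ofReal (m t * G (γ t)) ≠ ⊤) {δ : ℝ} (hδ : 0 < δ) :
    ∃ T, 0 ≤ T ∧ actionCost G T (γ 0) (γ 1) ≤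
      (∫⁻ t in Ioc (0:ℝ) 1, ENNReal.ofReal (m t * G (γ t))) +
        ENNReal.ofReal (δ * (∫ r in (0:ℝ)..1, m r) / 2) := by
  have hw : Measurable fun r => G (γ r) + δ := (hG.comp hγ.measurable).add_const δ
  obtain ⟨g, hg0, hgi, hmg, hT⟩ := exists_integrable_eq_mul hm h.1
    (h.integrableOn_Icc zero_le_one) hw hδ fun r => le_add_of_nonneg_left (hG0 _)
  have hT0 : 0 ≤ primitive g 1 := primitive_nonneg hg0 zero_le_one
  have hδT : δ ^ 2 / 2 * primitive g 1 ≤ δ * (∫ r in (0:ℝ)..1, m r) / 2 :=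
    calc δ ^ 2 / 2 * primitive g 1 ≤ δ ^ 2 / 2 * (δ⁻¹ * ∫ r in (0:ℝ)..1, m r) :=
          mul_le_mul_of_nonneg_left hT (by positivity)
      _ = _ := by field_simp
  have hcost := (lintegral_action_comp_primitiveInv_le hG0 hG hγ hδ.le hg0 hgi hmg).trans
    (add_le_add_right (ENNReal.ofReal_le_ofReal hδT) _)
  have hspeed := h.comp_primitiveInv hg0 hgi hw (fun r => add_nonneg (hG0 _) hδ.le) hmg
  refine ⟨primitive g 1, hT0, le_trans (sInf_le ?_) hcost⟩
  exact ⟨_, _, hspeed.continuousOn, by simp [primitiveInv_zero],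
    h.apply_primitiveInv_primitive_one hg0 hgi hmg, hspeed,
    intervalIntegrable_sq_of_lintegral_ne_top hT0
      (hw.comp (measurable_primitiveInv g)).aestronglyMeasurable
      (ne_top_of_le_ne_top (ENNReal.add_ne_top.2 ⟨hfin, ENNReal.ofReal_ne_top⟩) hcost), rfl⟩

theorem exists_actionCost_lt [MeasurableSpace X] [BorelSpace X] (hG0 : ∀ x, 0 ≤ G x)
    (hG : Measurable G) {c : ℝ≥0∞} (hc : finslerCost G x y < c) :
    ∃ T, 0 ≤ T ∧ actionCost G T x y < c := by
  obtain ⟨_, ⟨γ, m, hγ, rfl, rfl, h, rfl⟩, hlt⟩ := sInf_lt_iff.1 hc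
  obtain ⟨m', hm', hae, h'⟩ := h.exists_measurable zero_le_one
  -- Only `γ` on `[0,1]` matters; extending it continuously to `ℝ` makes `G ∘ γ'` measurable.
  set γ' : ℝ → X := fun t => γ (projIcc 0 1 zero_le_one t)
  have hγ' : Continuous γ' := hγ.comp_continuous (continuous_subtype_val.comp continuous_projIcc)
    fun t => (projIcc 0 1 zero_le_one t).2
  have hγγ' : EqOn γ γ' (Icc 0 1) := fun t ht => by simp [γ', projIcc_of_mem _ ht]
  have hcost : ∫⁻ t in Ioc (0:ℝ) 1, ENNReal.ofReal (m' t * G (γ' t)) =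
      ∫⁻ t in Ioc (0:ℝ) 1, ENNReal.ofReal (m t * G (γ t)) := by
    refine lintegral_congr_ae ?_
    filter_upwards [hae, ae_restrict_mem measurableSet_Ioc] with t ht ht'
    rw [ht, hγγ' (Ioc_subset_Icc_self ht')]
  obtain ⟨r, hr0, hrc⟩ := ENNReal.lt_iff_exists_add_pos_lt.1 hlt
  set L := ∫ t in (0:ℝ)..1, m' t
  have hL : 0 ≤ L := intervalIntegral.integral_nonneg zero_le_one h'.1
  obtain ⟨T, hT0, hT⟩ := exists_actionCost_le_of_isUpperSpeedOn hG0 hG hγ' hm' (h'.congr hγγ')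
    (hcost ▸ hlt.ne_top) (δ := r / (L + 1)) (by positivity)
  rw [← hγγ' (left_mem_Icc.2 zero_le_one), ← hγγ' (right_mem_Icc.2 zero_le_one), hcost] at hT
  refine ⟨T, hT0, hT.trans_lt (lt_of_le_of_lt (add_le_add_right ?_ _) hrc)⟩
  rw [← ENNReal.ofReal_coe_nnreal]
  refine ENNReal.ofReal_le_ofReal ?_
  rw [div_mul_eq_mul_div, div_div, div_le_iff₀ (by positivity)]
  nlinarith [r.coe_nonneg]

end Action

/-- If `G : X → [0,∞)` is Borel and `G y = 0`, then `T ↦ E_G^T(x,y)` is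
nonincreasing on `(0,∞)`, dominates `d_G(x,y)`, and converges to `d_G(x,y)` as `T → ∞`. -/
theorem actionCost_antitone_tendsto_finslerCost {X : Type*} [MetricSpace X]
    [MeasurableSpace X] [BorelSpace X]
    (G : X → ℝ) (hG0 : ∀ x, 0 ≤ G x) (hGmeas : Measurable G)
    (x y : X) (hGy : G y = 0) :
    (∀ T₁ T₂ : ℝ, 0 < T₁ → T₁ ≤ T₂ → actionCost G T₂ x y ≤ actionCost G T₁ x y) ∧
    (∀ T : ℝ, 0 < T → finslerCost G x y ≤ actionCost G T x y) ∧
    Filter.Tendsto (fun T : ℝ => actionCost G T x y) Filter.atTop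
      (nhds (finslerCost G x y)) := by
  refine ⟨fun T₁ T₂ h0 h12 => actionCost_antitone hGy h0.le h12,
    fun T hT => finslerCost_le_actionCost hT, tendsto_order.2 ⟨fun b hb => ?_, fun b hb => ?_⟩⟩
  · filter_upwards [eventually_gt_atTop 0] with T hT
    exact hb.trans_le (finslerCost_le_actionCost hT)
  · obtain ⟨T₀, hT₀, hlt⟩ := exists_actionCost_lt hG0 hGmeas hb
    filter_upwards [eventually_ge_atTop T₀] with T hT
    exact (actionCost_antitone hGy hT₀ hT).trans_lt hlt
end
end

section
/- Let (X,d) be a metric space, ω : X → (0,∞) a Borel function, and γ : [s,t] → X a continuous curve with integrable upper speed m such that L := ∫_s^t m(r)/ω(γ(r)) dr < ∞. Then there exists a continuous curve η : [0,L] → X with η(0) = γ(s) and η(L) = γ(t) such that r ↦ ω(η(r)) is an upper speed of η on [0,L]. If moreover ∫_s^t m(r)·ω(γ(r)) dr < ∞, then η can be chosen so that in addition ∫_0^L ω(η(r))² dr ≤ ∫_s^t m(r)·ω(γ(r)) dr. -/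
open MeasureTheory Set Filter
open scoped ENNReal

noncomputable section

/-! Reparameterize by the `ω`-length `σ r = ∫_s^r m / ω(γ)`: the new time is the generalized
inverse `τ` of `σ`, and `η = γ ∘ τ`. As `σ` is continuous and nondecreasing, `τ` pushes Lebesgue
measure on `[0, L]` forward to the measure with density `m / ω(γ)` on `[s, t]`. Hence
`∫_a^b ω(η) = ∫_{τ a}^{τ b} m ≥ d(η a, η b)` and `∫_0^L ω(η)² = ∫_s^t ω(γ)² m / ω(γ)`, which is
at most `∫_s^t m ω(γ)`. A curve with an integrable upper speed is continuous, and
`γ (τ L) = γ t` because `m` vanishes a.e. where `σ` is flat. -/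

/-- The first time in `[s, t]` at which `σ` reaches `x`, and `t` if it never does. -/
def hittingTime (σ : ℝ → ℝ) (s t x : ℝ) : ℝ := sInf (insert t {r ∈ Icc s t | x ≤ σ r})

section hittingTime

variable {σ : ℝ → ℝ} {s t x r : ℝ}

lemma hittingTime_le (hr : r ∈ Icc s t) (hx : x ≤ σ r) : hittingTime σ s t x ≤ r :=
  csInf_le ⟨s, by rintro u (rfl | hu); exacts [hr.1.trans hr.2, hu.1.1]⟩
    (mem_insert_of_mem _ ⟨hr, hx⟩)

lemma hittingTime_mem_Icc (hst : s ≤ t) (x : ℝ) : hittingTime σ s t x ∈ Icc s t :=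
  ⟨le_csInf (insert_nonempty _ _) (by rintro u (rfl | hu); exacts [hst, hu.1.1]),
    csInf_le ⟨s, by rintro u (rfl | hu); exacts [hst, hu.1.1]⟩ (mem_insert _ _)⟩

lemma hittingTime_mono (hst : s ≤ t) : Monotone (hittingTime σ s t) := fun _ _ hxy =>
  csInf_le_csInf ⟨s, by rintro u (rfl | hu); exacts [hst, hu.1.1]⟩ (insert_nonempty _ _)
    (insert_subset_insert fun _ hu => ⟨hu.1, hxy.trans hu.2⟩)

lemma hittingTime_of_le (hst : s ≤ t) (hx : x ≤ σ s) : hittingTime σ s t x = s :=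
  (hittingTime_le (left_mem_Icc.2 hst) hx).antisymm (hittingTime_mem_Icc hst x).1

lemma le_apply_hittingTime (hσ : ContinuousOn σ (Icc s t)) (hst : s ≤ t) (hx : x ≤ σ t) :
    x ≤ σ (hittingTime σ s t x) := by
  have hclosed : IsClosed {r ∈ Icc s t | x ≤ σ r} :=
    hσ.preimage_isClosed_of_isClosed isClosed_Icc isClosed_Ici
  rw [hittingTime, insert_eq_of_mem (show t ∈ {r ∈ Icc s t | x ≤ σ r} from
    ⟨right_mem_Icc.2 hst, hx⟩)]
  exact (hclosed.csInf_mem ⟨t, right_mem_Icc.2 hst, hx⟩ ⟨s, fun u hu => hu.1.1⟩).2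

lemma hittingTime_le_iff (hσ : Monotone σ) (hσc : ContinuousOn σ (Icc s t)) (hst : s ≤ t)
    (hx : x ∈ Ioc (σ s) (σ t)) (r : ℝ) :
    hittingTime σ s t x ≤ r ↔ x ≤ σ r := by
  refine ⟨fun h => (le_apply_hittingTime hσc hst hx.2).trans (hσ h), fun h => ?_⟩
  rcases lt_or_ge t r with htr | hrt
  · exact (hittingTime_mem_Icc hst x).2.trans htr.le
  · exact hittingTime_le ⟨(hσ.reflect_lt (hx.1.trans_le h)).le, hrt⟩ h

lemma apply_hittingTime (hσ : Monotone σ) (hσc : ContinuousOn σ (Icc s t)) (hst : s ≤ t)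
    (hx : x ∈ Icc (σ s) (σ t)) : σ (hittingTime σ s t x) = x := by
  have hmem := hittingTime_mem_Icc (σ := σ) hst x
  obtain ⟨r, hr, rfl⟩ := intermediate_value_Icc hmem.1 (hσc.mono (Icc_subset_Icc_right hmem.2))
    ⟨hx.1, le_apply_hittingTime hσc hst hx.2⟩
  exact le_antisymm (hσ (hittingTime_le ⟨hr.1, hr.2.trans hmem.2⟩ le_rfl))
    (le_apply_hittingTime hσc hst hx.2)

lemma hittingTime_preimage_Ioc_inter_Ioc (hσ : Monotone σ) (hσc : ContinuousOn σ (Icc s t))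
    (hst : s ≤ t) {a b : ℝ} (ha : σ s ≤ a) (hb : b ≤ σ t) (p q : ℝ) :
    hittingTime σ s t ⁻¹' Ioc p q ∩ Ioc a b = Ioc (max (σ p) a) (min (σ q) b) := by
  ext x
  simp only [mem_inter_iff, mem_preimage, mem_Ioc, max_lt_iff, le_min_iff]
  constructor
  · rintro ⟨⟨hp, hq⟩, hax, hxb⟩
    have hx : x ∈ Ioc (σ s) (σ t) := ⟨ha.trans_lt hax, hxb.trans hb⟩
    rw [← not_le, hittingTime_le_iff hσ hσc hst hx, not_le] at hp
    exact ⟨⟨hp, hax⟩, (hittingTime_le_iff hσ hσc hst hx q).1 hq, hxb⟩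
  · rintro ⟨⟨hp, hax⟩, hq, hxb⟩
    have hx : x ∈ Ioc (σ s) (σ t) := ⟨ha.trans_lt hax, hxb.trans hb⟩
    refine ⟨⟨?_, (hittingTime_le_iff hσ hσc hst hx q).2 hq⟩, hax, hxb⟩
    rw [← not_le, hittingTime_le_iff hσ hσc hst hx, not_le]
    exact hp

theorem map_hittingTime_restrict_Ioc {ν : Measure ℝ}
    (hν : ∀ u v, ν (Ioc u v) = ENNReal.ofReal (σ v - σ u)) (hσ : Monotone σ)
    (hσc : ContinuousOn σ (Icc s t)) (hst : s ≤ t) {a b : ℝ} (ha : σ s ≤ a) (hab : a ≤ b)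
    (hb : b ≤ σ t) :
    (volume.restrict (Ioc a b)).map (hittingTime σ s t) =
      ν.restrict (Ioc (hittingTime σ s t a) (hittingTime σ s t b)) := by
  have hτ : Measurable (hittingTime σ s t) := (hittingTime_mono hst).measurable
  refine Measure.ext_of_Ioc _ _ fun p q _ => ?_
  rw [Measure.map_apply hτ measurableSet_Ioc, Measure.restrict_apply (hτ measurableSet_Ioc),
    hittingTime_preimage_Ioc_inter_Ioc hσ hσc hst ha hb, Real.volume_Ioc,
    Measure.restrict_apply measurableSet_Ioc, Ioc_inter_Ioc, hν,
    hσ.map_sup, hσ.map_inf, apply_hittingTime hσ hσc hst ⟨ha, hab.trans hb⟩,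
    apply_hittingTime hσ hσc hst ⟨ha.trans hab, hb⟩]

end hittingTime

section primitive

variable {f : ℝ → ℝ}

lemma monotone_primitive_s19 (hf : Integrable f) (hf0 : 0 ≤ f) (s : ℝ) :
    Monotone fun r => ∫ u in s..r, f u := fun _ _ huv => by
  rw [← sub_nonneg, intervalIntegral.integral_interval_sub_left hf.intervalIntegrable
    hf.intervalIntegrable]
  exact intervalIntegral.integral_nonneg huv fun x _ => hf0 x

lemma withDensity_ofReal_apply_Ioc (hf : Integrable f) (hf0 : 0 ≤ f) (s u v : ℝ) :
    volume.withDensity (fun r => ENNReal.ofReal (f r)) (Ioc u v) =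
      ENNReal.ofReal ((∫ r in s..v, f r) - ∫ r in s..u, f r) := by
  rw [withDensity_apply _ measurableSet_Ioc,
    intervalIntegral.integral_interval_sub_left hf.intervalIntegrable hf.intervalIntegrable]
  rcases le_total u v with huv | hvu
  · rw [intervalIntegral.integral_of_le huv,
      ofReal_integral_eq_lintegral_ofReal hf.integrableOn (ae_of_all _ hf0)]
  · rw [Ioc_eq_empty_of_le hvu, Measure.restrict_empty, lintegral_zero_measure, eq_comm,
      ENNReal.ofReal_eq_zero, intervalIntegral.integral_symm, neg_nonpos]
    exact intervalIntegral.integral_nonneg hvu fun x _ => hf0 x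

lemma setLIntegral_comp_hittingTime_primitive (hf : Integrable f) (hf0 : 0 ≤ f) {s t : ℝ}
    (hst : s ≤ t) {g : ℝ → ℝ≥0∞} (hg : AEMeasurable g (volume.restrict (Icc s t))) {a b : ℝ}
    (ha : 0 ≤ a) (hab : a ≤ b) (hb : b ≤ ∫ u in s..t, f u) :
    ∫⁻ x in Ioc a b, g (hittingTime (fun r => ∫ u in s..r, f u) s t x) =
      ∫⁻ r in Ioc (hittingTime (fun r => ∫ u in s..r, f u) s t a)
        (hittingTime (fun r => ∫ u in s..r, f u) s t b), ENNReal.ofReal (f r) * g r := by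
  have hmap := map_hittingTime_restrict_Ioc (withDensity_ofReal_apply_Ioc hf hf0 s)
    (monotone_primitive_s19 hf hf0 s)
    (intervalIntegral.continuous_primitive (fun _ _ => hf.intervalIntegrable) s).continuousOn
    hst (intervalIntegral.integral_same.trans_le ha) hab hb
  rw [restrict_withDensity measurableSet_Ioc] at hmap
  set τ := hittingTime (fun r => ∫ u in s..r, f u) s t
  have hg' : AEMeasurable g (volume.restrict (Ioc (τ a) (τ b))) :=
    hg.mono_measure <| Measure.restrict_mono (Ioc_subset_Icc_self.trans
      (Icc_subset_Icc (hittingTime_mem_Icc hst a).1 (hittingTime_mem_Icc hst b).2)) le_rfl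
  rw [← lintegral_map' ?_ (hittingTime_mono hst).measurable.aemeasurable, hmap,
    lintegral_withDensity_eq_lintegral_mul₀ hf.aemeasurable.ennreal_ofReal.restrict hg']
  · rfl
  · rw [hmap]
    exact hg'.mono_ac (withDensity_absolutelyContinuous _ _)

end primitive

section timeChange

-- Cut off outside `(s, t]`, so that its primitive is monotone on all of `ℝ`.
def timeChangeDensity (w m : ℝ → ℝ) (s t : ℝ) : ℝ → ℝ := (Ioc s t).indicator fun r => m r / w r

def timeChange (w m : ℝ → ℝ) (s t : ℝ) : ℝ → ℝ :=
  hittingTime (fun r => ∫ u in s..r, timeChangeDensity w m s t u) s t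

variable {w m : ℝ → ℝ} {s t : ℝ}

lemma timeChangeDensity_nonneg (hw : ∀ r ∈ Icc s t, 0 < w r) (hm : ∀ r ∈ Icc s t, 0 ≤ m r) :
    0 ≤ timeChangeDensity w m s t :=
  indicator_nonneg fun r hr => div_nonneg (hm r (Ioc_subset_Icc_self hr))
    (hw r (Ioc_subset_Icc_self hr)).le

lemma integrable_timeChangeDensity (hmw : IntegrableOn (fun r => m r / w r) (Ioc s t)) :
    Integrable (timeChangeDensity w m s t) :=
  (integrable_indicator_iff measurableSet_Ioc).2 hmw

lemma integral_timeChangeDensity (hst : s ≤ t) :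
    ∫ u in s..t, timeChangeDensity w m s t u = ∫ u in s..t, m u / w u := by
  rw [intervalIntegral.integral_of_le hst, intervalIntegral.integral_of_le hst, timeChangeDensity,
    setIntegral_indicator measurableSet_Ioc, inter_self]

lemma ofReal_timeChangeDensity_mul (hw : ∀ r ∈ Icc s t, 0 < w r) (hm : ∀ r ∈ Icc s t, 0 ≤ m r)
    {r : ℝ} (hr : r ∈ Ioc s t) :
    ENNReal.ofReal (timeChangeDensity w m s t r) * ENNReal.ofReal (w r) = ENNReal.ofReal (m r) := by
  rw [← ENNReal.ofReal_mul (timeChangeDensity_nonneg hw hm r), timeChangeDensity,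
    indicator_of_mem hr, div_mul_cancel₀ _ (hw r (Ioc_subset_Icc_self hr)).ne']

lemma timeChange_mem_Icc (hst : s ≤ t) (x : ℝ) : timeChange w m s t x ∈ Icc s t :=
  hittingTime_mem_Icc hst x

lemma timeChange_mono (hst : s ≤ t) : Monotone (timeChange w m s t) :=
  hittingTime_mono hst

lemma timeChange_zero (hst : s ≤ t) : timeChange w m s t 0 = s :=
  hittingTime_of_le hst intervalIntegral.integral_same.ge

lemma setLIntegral_comp_timeChange (hst : s ≤ t) (hw : ∀ r ∈ Icc s t, 0 < w r)
    (hm : ∀ r ∈ Icc s t, 0 ≤ m r) (hmw : IntegrableOn (fun r => m r / w r) (Ioc s t))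
    (hwm : AEMeasurable w (volume.restrict (Icc s t))) {h : ℝ → ℝ≥0∞}
    (hh : AEMeasurable h (volume.restrict (Icc s t))) {a b : ℝ} (ha : 0 ≤ a) (hab : a ≤ b)
    (hb : b ≤ ∫ u in s..t, m u / w u) :
    ∫⁻ x in Ioc a b, h (timeChange w m s t x) * ENNReal.ofReal (w (timeChange w m s t x)) =
      ∫⁻ r in Ioc (timeChange w m s t a) (timeChange w m s t b), h r * ENNReal.ofReal (m r) := by
  rw [timeChange, setLIntegral_comp_hittingTime_primitive (integrable_timeChangeDensity hmw)
    (timeChangeDensity_nonneg hw hm) hst (g := fun r => h r * ENNReal.ofReal (w r))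
    (hh.mul hwm.ennreal_ofReal) ha hab
    (by rwa [integral_timeChangeDensity hst])]
  refine setLIntegral_congr_fun measurableSet_Ioc fun r hr => ?_
  rw [mul_left_comm, ofReal_timeChangeDensity_mul hw hm
    ⟨(timeChange_mem_Icc hst a).1.trans_lt hr.1, hr.2.trans (timeChange_mem_Icc hst b).2⟩]

lemma setLIntegral_Ioc_timeChange_integral_eq_zero (hst : s ≤ t) (hw : ∀ r ∈ Icc s t, 0 < w r)
    (hm : ∀ r ∈ Icc s t, 0 ≤ m r) (hmw : IntegrableOn (fun r => m r / w r) (Ioc s t)) :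
    ∫⁻ r in Ioc (timeChange w m s t (∫ u in s..t, m u / w u)) t, ENNReal.ofReal (m r) = 0 := by
  have hf := integrable_timeChangeDensity hmw
  have hf0 := timeChangeDensity_nonneg hw hm
  set τL := timeChange w m s t (∫ u in s..t, m u / w u)
  have hτL : τL ∈ Icc s t := timeChange_mem_Icc hst _
  have hστL : ∫ u in s..τL, timeChangeDensity w m s t u = ∫ u in s..t, m u / w u :=
    apply_hittingTime (monotone_primitive_s19 hf hf0 s)
      (intervalIntegral.continuous_primitive (fun _ _ => hf.intervalIntegrable) s).continuousOn
      hst ⟨(integral_timeChangeDensity hst).symm ▸ monotone_primitive_s19 hf hf0 s hst,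
        (integral_timeChangeDensity hst).ge⟩
  have hf_ae : ∀ᵐ r ∂volume.restrict (Ioc τL t),
      ENNReal.ofReal (timeChangeDensity w m s t r) = 0 := by
    refine (lintegral_eq_zero_iff' hf.aemeasurable.ennreal_ofReal.restrict).1 ?_
    rw [← withDensity_apply _ measurableSet_Ioc, withDensity_ofReal_apply_Ioc hf hf0 s, hστL,
      integral_timeChangeDensity hst, sub_self, ENNReal.ofReal_zero]
  refine (lintegral_congr_ae ?_).trans lintegral_zero
  filter_upwards [hf_ae, ae_restrict_mem measurableSet_Ioc] with r hr hmem
  rw [← ofReal_timeChangeDensity_mul hw hm ⟨hτL.1.trans_lt hmem.1, hmem.2⟩, hr, zero_mul]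

end timeChange

lemma IsUpperSpeedOn.continuousOn_s19 {X : Type*} [MetricSpace X] {γ : ℝ → X} {m : ℝ → ℝ}
    {a b : ℝ} (h : IsUpperSpeedOn γ m a b) : ContinuousOn γ (Icc a b) := by
  obtain ⟨-, hm, hdist⟩ := h
  rcases lt_or_ge b a with hba | hab
  · simp [Icc_eq_empty_of_lt hba]
  have hW : ContinuousOn (fun x => ∫ r in a..x, m r) (Icc a b) := by
    simpa [uIcc_of_le hab] using intervalIntegral.continuousOn_primitive_interval' hm left_mem_uIcc
  have hii : ∀ x ∈ Icc a b, IntervalIntegrable m volume a x := fun x hx =>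
    hm.mono_set (by rw [uIcc_of_le hab, uIcc_of_le hx.1]; exact Icc_subset_Icc_right hx.2)
  have hbound : ∀ x ∈ Icc a b, ∀ y ∈ Icc a b,
      dist (γ x) (γ y) ≤ dist (∫ r in a..x, m r) (∫ r in a..y, m r) := by
    intro x hx y hy
    wlog hxy : x ≤ y generalizing x y
    · rw [dist_comm, dist_comm (∫ r in a..x, m r)]
      exact this y hy x hx (le_of_not_ge hxy)
    calc dist (γ x) (γ y) ≤ ∫ r in x..y, m r := hdist x y hx.1 hxy hy.2
      _ = (∫ r in a..y, m r) - ∫ r in a..x, m r :=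
        (intervalIntegral.integral_interval_sub_left (hii y hy) (hii x hx)).symm
      _ ≤ dist (∫ r in a..x, m r) (∫ r in a..y, m r) := by
        rw [dist_comm, Real.dist_eq]; exact le_abs_self _
  intro x hx
  refine tendsto_iff_dist_tendsto_zero.2 (squeeze_zero' (Eventually.of_forall fun _ => dist_nonneg)
    ?_ (tendsto_iff_dist_tendsto_zero.1 (hW x hx)))
  exact eventually_nhdsWithin_of_forall fun y hy => hbound y hy x hx

section curve

variable {X : Type*} [MetricSpace X] {ω : X → ℝ} {γ : ℝ → X} {m : ℝ → ℝ} {s t : ℝ}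

local notation "τ" => timeChange (fun r => ω (γ r)) m s t

lemma comp_timeChange_integral (hωpos : ∀ x, 0 < ω x) (hst : s ≤ t)
    (hm : IsUpperSpeedOn γ m s t) (hmω : IntegrableOn (fun r => m r / ω (γ r)) (Ioc s t)) :
    γ (τ (∫ r in s..t, m r / ω (γ r))) = γ t := by
  have hτL : τ (∫ r in s..t, m r / ω (γ r)) ∈ Icc s t := timeChange_mem_Icc hst _
  refine dist_le_zero.1 <| (hm.2.2 _ _ hτL.1 hτL.2 le_rfl).trans_eq ?_
  rw [intervalIntegral.integral_of_le hτL.2, integral_eq_lintegral_of_nonneg_ae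
    ((ae_restrict_iff' measurableSet_Ioc).2 <| ae_of_all _ fun r hr =>
      hm.1 r ⟨hτL.1.trans hr.1.le, hr.2⟩)
    (hm.2.1.1.mono_set (Ioc_subset_Ioc hτL.1 le_rfl)).aestronglyMeasurable,
    setLIntegral_Ioc_timeChange_integral_eq_zero hst (fun r _ => hωpos (γ r)) hm.1 hmω,
    ENNReal.toReal_zero]

variable [MeasurableSpace X] [BorelSpace X]

lemma measurable_weight_comp_timeChange (hωmeas : Measurable ω) (hst : s ≤ t)
    (hγ : ContinuousOn γ (Icc s t)) : Measurable fun x => ω (γ (τ x)) :=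
  hωmeas.comp <| hγ.domRestrict.measurable.comp <|
    (timeChange_mono hst).measurable.subtype_mk (h := timeChange_mem_Icc hst)

lemma setLIntegral_weight_comp_timeChange (hωpos : ∀ x, 0 < ω x) (hωmeas : Measurable ω)
    (hst : s ≤ t) (hγ : ContinuousOn γ (Icc s t)) (hm : IsUpperSpeedOn γ m s t)
    (hmω : IntegrableOn (fun r => m r / ω (γ r)) (Ioc s t)) {a b : ℝ} (ha : 0 ≤ a) (hab : a ≤ b)
    (hb : b ≤ ∫ r in s..t, m r / ω (γ r)) :
    ∫⁻ x in Ioc a b, ENNReal.ofReal (ω (γ (τ x))) = ENNReal.ofReal (∫ r in τ a..τ b, m r) := by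
  have h := setLIntegral_comp_timeChange hst (fun r _ => hωpos (γ r)) hm.1 hmω
    (hωmeas.comp_aemeasurable (hγ.aemeasurable measurableSet_Icc)) aemeasurable_const ha hab hb
    (h := 1)
  simp only [Pi.one_apply, one_mul] at h
  have hτa : τ a ∈ Icc s t := timeChange_mem_Icc hst _
  have hτb : τ b ∈ Icc s t := timeChange_mem_Icc hst _
  rw [h, intervalIntegral.integral_of_le (timeChange_mono hst hab),
    ofReal_integral_eq_lintegral_ofReal (hm.2.1.1.mono_set (Ioc_subset_Ioc hτa.1 hτb.2))]
  exact (ae_restrict_iff' measurableSet_Ioc).2 <| ae_of_all _ fun r hr =>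
    hm.1 r ⟨hτa.1.trans hr.1.le, hr.2.trans hτb.2⟩

lemma isUpperSpeedOn_comp_timeChange (hωpos : ∀ x, 0 < ω x) (hωmeas : Measurable ω)
    (hst : s ≤ t) (hγ : ContinuousOn γ (Icc s t)) (hm : IsUpperSpeedOn γ m s t)
    (hmω : IntegrableOn (fun r => m r / ω (γ r)) (Ioc s t)) :
    IsUpperSpeedOn (fun x => γ (τ x)) (fun x => ω (γ (τ x))) 0 (∫ r in s..t, m r / ω (γ r)) := by
  set L := ∫ r in s..t, m r / ω (γ r)
  have hL : 0 ≤ L := intervalIntegral.integral_nonneg hst fun r hr =>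
    div_nonneg (hm.1 r hr) (hωpos _).le
  have hmeas : Measurable fun x => ω (γ (τ x)) := measurable_weight_comp_timeChange hωmeas hst hγ
  have hint : ∀ a b, 0 ≤ a → a ≤ b → b ≤ L → IntegrableOn (fun x => ω (γ (τ x))) (Ioc a b) :=
    fun a b ha hab hb => ⟨hmeas.aestronglyMeasurable,
      (hasFiniteIntegral_iff_ofReal (ae_of_all _ fun _ => (hωpos _).le)).2 <| by
        rw [setLIntegral_weight_comp_timeChange hωpos hωmeas hst hγ hm hmω ha hab hb]
        exact ENNReal.ofReal_lt_top⟩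
  refine ⟨fun _ _ => (hωpos _).le,
    (intervalIntegrable_iff_integrableOn_Ioc_of_le hL).2 (hint 0 L le_rfl hL le_rfl),
    fun a b ha hab hb => ?_⟩
  have hτa : τ a ∈ Icc s t := timeChange_mem_Icc hst _
  have hτb : τ b ∈ Icc s t := timeChange_mem_Icc hst _
  calc dist (γ (τ a)) (γ (τ b)) ≤ ∫ r in τ a..τ b, m r :=
        hm.2.2 _ _ hτa.1 (timeChange_mono hst hab) hτb.2
    _ = ∫ x in a..b, ω (γ (τ x)) := by
        rw [intervalIntegral.integral_of_le hab]
        refine (ENNReal.ofReal_eq_ofReal_iff (intervalIntegral.integral_nonneg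
          (timeChange_mono hst hab) fun r hr => hm.1 r ⟨hτa.1.trans hr.1, hr.2.trans hτb.2⟩)
          (setIntegral_nonneg measurableSet_Ioc fun _ _ => (hωpos _).le)).1 ?_
        rw [ofReal_integral_eq_lintegral_ofReal (hint a b ha hab hb)
          (ae_of_all _ fun _ => (hωpos _).le),
          setLIntegral_weight_comp_timeChange hωpos hωmeas hst hγ hm hmω ha hab hb]

lemma integral_sq_comp_timeChange_le (hωpos : ∀ x, 0 < ω x) (hωmeas : Measurable ω)
    (hst : s ≤ t) (hγ : ContinuousOn γ (Icc s t)) (hm : IsUpperSpeedOn γ m s t)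
    (hmω : IntegrableOn (fun r => m r / ω (γ r)) (Ioc s t))
    (hmω' : IntegrableOn (fun r => m r * ω (γ r)) (Ioc s t)) :
    ∫ x in (0 : ℝ)..(∫ r in s..t, m r / ω (γ r)), ω (γ (τ x)) ^ 2 ≤
      ∫ r in s..t, m r * ω (γ r) := by
  set L := ∫ r in s..t, m r / ω (γ r)
  have hL : 0 ≤ L := intervalIntegral.integral_nonneg hst fun r hr =>
    div_nonneg (hm.1 r hr) (hωpos _).le
  have hωγ : AEMeasurable (fun r => ω (γ r)) (volume.restrict (Icc s t)) :=
    hωmeas.comp_aemeasurable (hγ.aemeasurable measurableSet_Icc)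
  have hchange := setLIntegral_comp_timeChange hst (fun r _ => hωpos (γ r)) hm.1 hmω hωγ
    hωγ.ennreal_ofReal le_rfl hL le_rfl
  rw [timeChange_zero hst] at hchange
  have hmω'_nonneg : 0 ≤ᵐ[volume.restrict (Ioc s t)] fun r => m r * ω (γ r) :=
    (ae_restrict_iff' measurableSet_Ioc).2 <| ae_of_all _ fun r hr =>
      mul_nonneg (hm.1 r (Ioc_subset_Icc_self hr)) (hωpos _).le
  rw [intervalIntegral.integral_of_le hL, intervalIntegral.integral_of_le hst,
    integral_eq_lintegral_of_nonneg_ae (ae_of_all _ fun _ => sq_nonneg _)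
      ((measurable_weight_comp_timeChange (m := m) hωmeas hst hγ).pow_const 2).aestronglyMeasurable]
  refine ENNReal.toReal_le_of_le_ofReal (integral_nonneg_of_ae hmω'_nonneg) ?_
  calc ∫⁻ x in Ioc 0 L, ENNReal.ofReal (ω (γ (τ x)) ^ 2)
      = ∫⁻ r in Ioc s (τ L), ENNReal.ofReal (ω (γ r)) * ENNReal.ofReal (m r) := by
        simp_rw [← hchange, sq, ENNReal.ofReal_mul (hωpos _).le]
    _ ≤ ∫⁻ r in Ioc s t, ENNReal.ofReal (ω (γ r)) * ENNReal.ofReal (m r) :=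
        lintegral_mono_set (Ioc_subset_Ioc le_rfl (timeChange_mem_Icc hst L).2)
    _ = ENNReal.ofReal (∫ r in Ioc s t, m r * ω (γ r)) := by
        rw [ofReal_integral_eq_lintegral_ofReal hmω' hmω'_nonneg]
        refine setLIntegral_congr_fun measurableSet_Ioc fun r _ => ?_
        rw [mul_comm (m r), ENNReal.ofReal_mul (hωpos _).le]

end curve

/-- (Length and time reparameterization.) Let `ω : X → (0,∞)` be Borel and
`γ : [s,t] → X` continuous with integrable upper speed `m` such that
`L := ∫_s^t m(r)/ω(γ r) dr < ∞` (i.e. the integrand is integrable). Then there is a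
continuous curve `η : [0,L] → X` from `γ s` to `γ t` whose speed is bounded by `ω∘η`
(i.e. `ω∘η` is an upper speed of `η` on `[0,L]`). If moreover `∫_s^t m(r) ω(γ r) dr < ∞`,
then `η` can be chosen so that in addition `∫_0^L ω(η r)² dr ≤ ∫_s^t m(r) ω(γ r) dr`. -/
theorem reparameterization {X : Type*} [MetricSpace X] [MeasurableSpace X] [BorelSpace X]
    (ω : X → ℝ) (hωpos : ∀ x, 0 < ω x) (hωmeas : Measurable ω)
    (s t : ℝ) (hst : s ≤ t) (γ : ℝ → X) (m : ℝ → ℝ)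
    (hγcont : ContinuousOn γ (Set.Icc s t)) (hm : IsUpperSpeedOn γ m s t)
    (hLint : IntervalIntegrable (fun r => m r / ω (γ r)) MeasureTheory.volume s t)
    (L : ℝ) (hL : L = ∫ r in s..t, m r / ω (γ r)) :
    (∃ η : ℝ → X, ContinuousOn η (Set.Icc 0 L) ∧ η 0 = γ s ∧ η L = γ t ∧
      IsUpperSpeedOn η (fun r => ω (η r)) 0 L) ∧
    (IntervalIntegrable (fun r => m r * ω (γ r)) MeasureTheory.volume s t →
      ∃ η : ℝ → X, ContinuousOn η (Set.Icc 0 L) ∧ η 0 = γ s ∧ η L = γ t ∧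
        IsUpperSpeedOn η (fun r => ω (η r)) 0 L ∧
        (∫ r in (0:ℝ)..L, (ω (η r)) ^ 2) ≤ ∫ r in s..t, m r * ω (γ r)) := by
  subst hL
  have hspeed := isUpperSpeedOn_comp_timeChange hωpos hωmeas hst hγcont hm hLint.1
  have hstart : γ (timeChange (fun r => ω (γ r)) m s t 0) = γ s := by rw [timeChange_zero hst]
  have hend := comp_timeChange_integral hωpos hst hm hLint.1
  exact ⟨⟨_, hspeed.continuousOn_s19, hstart, hend, hspeed⟩, fun hmω =>
    ⟨_, hspeed.continuousOn_s19, hstart, hend, hspeed,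
      integral_sq_comp_timeChange_le hωpos hωmeas hst hγcont hm hLint.1 hmω.1⟩⟩
end
end
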